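/- The elements γᵢ := (σ₁σ₂⋯σ_{i−1}) σᵢ (σ_{i−1}⁻¹⋯σ₁⁻¹), i ≥ 1, generate the braid group B∞; that is, each Artin generator σᵢ lies in the subgroup generated by {γ₁, γ₂, γ₃, ...}. -/
import Mathlib


/-- The braid relations on the free group over generators indexed by `ℕ+`. -/
def braidRels : Set (FreeGroup ℕ+) :=
  {w | ∃ i j : ℕ+, (i : ℕ) + 1 = (j : ℕ) ∧
      w = .of i * .of j * .of i * (.of j * .of i * .of j)⁻¹} ∪
  {w | ∃ i j : ℕ+, (i : ℕ) + 1 < (j : ℕ) ∧ w = .of i * .of j * (.of j * .of i)⁻¹}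

/-- The infinite braid group `B∞`. -/
abbrev BraidGroup : Type := PresentedGroup braidRels

/-- The Artin generator `σᵢ` of `B∞`. -/
def braidGen (i : ℕ+) : BraidGroup := PresentedGroup.of i

/-- The ascending word `σ₁ σ₂ ⋯ σₙ` (empty for `n = 0`). -/
def ascWord : ℕ → BraidGroup
  | 0 => 1
  | n + 1 => ascWord n * braidGen n.succPNat

/-- The square root of a free generator:
`γᵢ = (σ₁ σ₂ ⋯ σ_{i-1}) σᵢ (σ_{i-1}⁻¹ ⋯ σ₂⁻¹ σ₁⁻¹)`. -/
def sqrtFreeGen (i : ℕ+) : BraidGroup :=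
  ascWord ((i : ℕ) - 1) * braidGen i * (ascWord ((i : ℕ) - 1))⁻¹

lemma ascWord_mem (n : ℕ) :
    ascWord n ∈ Subgroup.closure (Set.range sqrtFreeGen) := by
  induction n with
  | zero => exact one_mem _
  | succ n ih =>
      have key : ascWord (n + 1) = sqrtFreeGen n.succPNat * ascWord n := by
        have h1 : ((n.succPNat : ℕ) - 1) = n := by simp [Nat.succPNat]
        simp [ascWord, sqrtFreeGen, h1, mul_assoc]
      rw [key]
      exact mul_mem (Subgroup.subset_closure ⟨_, rfl⟩) ih

/-- The square roots of free generators `γ₁, γ₂, …` generate `B∞`: each Artin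
generator lies in the subgroup they generate. -/
theorem sqrtFreeGen_generate (i : ℕ+) :
    braidGen i ∈ Subgroup.closure (Set.range sqrtFreeGen) := by
  have key : braidGen i =
      (ascWord ((i : ℕ) - 1))⁻¹ * sqrtFreeGen i * ascWord ((i : ℕ) - 1) := by
    simp [sqrtFreeGen, mul_assoc]
  rw [key]
  exact mul_mem (mul_mem (inv_mem (ascWord_mem _))
    (Subgroup.subset_closure ⟨_, rfl⟩)) (ascWord_mem _)
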